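/- Let n be a positive odd integer. For 0 ≤ k ≤ (n-1)/2, the congruence (aq;q^2)_{(n-1)/2-k} / (q^2/a;q^2)_{(n-1)/2-k} ≡ (-a)^{(n-1)/2-2k} · (aq;q^2)_k / (q^2/a;q^2)_k · q^{(n-1)^2/4 + k} holds modulo Φ_n(q), meaning that after clearing denominators the difference of the cross-products is divisible by Φ_n(q) in Z[a,q]. -/

import Mathlib

open Polynomial Finset

noncomputable section

/-- The field `ℚ(a)` of rational functions in the parameter `a`. -/
abbrev K0 : Type := RatFunc ℚ

/-- The field `ℚ(a)(q)` of rational functions in `q` over `ℚ(a)`. -/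
abbrev L : Type := RatFunc K0

/-- The parameter `a`, viewed in `ℚ(a)(q)`. -/
def a : L := RatFunc.C (RatFunc.X : K0)

/-- The parameter `a`, viewed in `ℚ(a)`. -/
def aP : K0 := RatFunc.X

/-- The indeterminate `q`. -/
def q : L := RatFunc.X

/-- The `q`-integer `[n]_q = 1 + q + ⋯ + q^{n-1}`. -/
def qint (n : ℕ) : L := ∑ i ∈ range n, q ^ i

/-- The `q`-integer as a polynomial in `q` over `ℚ(a)`. -/
def qintP (n : ℕ) : Polynomial K0 := ∑ i ∈ range n, X ^ i

/-- The `q`-shifted factorial `(x; r)_k = ∏_{i=0}^{k-1} (1 - x r^i)`. -/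
def qpoch (x r : L) (k : ℕ) : L := ∏ i ∈ range k, (1 - x * r ^ i)

/-- `A ≡ B (mod P)`: the difference `A - B`, as a rational function in `q`
over `ℚ(a)`, can be written as a fraction `N/D` with `D` coprime to `P` and
`P ∣ N` in `ℚ(a)[q]`. -/
def PolyModEq (P : Polynomial K0) (A B : L) : Prop :=
  ∃ N D : Polynomial K0, IsCoprime D P ∧ P ∣ N ∧
    (A - B) * algebraMap (Polynomial K0) L D = algebraMap (Polynomial K0) L N


/-! ### Auxiliary lemmas -/

lemma sum_odd_sq (s : ℕ) : ∑ i ∈ range s, (2*i+1) = s^2 := by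
  induction s with
  | zero => simp
  | succ t ih => rw [Finset.sum_range_succ, ih]; ring

lemma key_prod {R : Type*} [CommRing R] (m : ℕ) (x u v : R)
    (hx : x ^ (2*m+1) = 1) (huv : u * v = 1) (s : ℕ) (hs : s ≤ m) :
    ∏ i ∈ range s, (1 - u * x^(2*i+1))
      = (-u)^s * x^(s^2) * ∏ i ∈ range s, (1 - v * x^(2*(m-s+1+i))) := by
  have hfac : ∀ i ∈ range s, (1 - u * x^(2*i+1))
      = (-(u * x^(2*i+1))) * (1 - v * x^(2*(m-i))) := by
    intro i hi
    have hi' : i < s := mem_range.mp hi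
    have h1 : 2*i+1 + 2*(m-i) = 2*m+1 := by omega
    have hone : (u * x^(2*i+1)) * (v * x^(2*(m-i))) = 1 := by
      calc (u * x^(2*i+1)) * (v * x^(2*(m-i))) = (u*v) * x^(2*i+1 + 2*(m-i)) := by
            rw [pow_add]; ring
        _ = 1 := by rw [h1, huv, hx, one_mul]
    linear_combination -hone
  rw [prod_congr rfl hfac, prod_mul_distrib]
  have h2 : ∏ i ∈ range s, (-(u * x^(2*i+1))) = (-u)^s * x^(s^2) := by
    have : ∀ i ∈ range s, (-(u * x^(2*i+1))) = (-u) * x^(2*i+1) := by intros; ring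
    rw [prod_congr rfl this, prod_mul_distrib, prod_const, card_range,
      prod_pow_eq_pow_sum, sum_odd_sq]
  have h3 : ∏ i ∈ range s, (1 - v * x^(2*(m-i)))
      = ∏ i ∈ range s, (1 - v * x^(2*(m-s+1+i))) := by
    rw [← prod_range_reflect (fun j => 1 - v * x^(2*(m-s+1+j))) s]
    apply prod_congr rfl
    intro j hj
    have hj' : j < s := mem_range.mp hj
    have : m - s + 1 + (s - 1 - j) = m - j := by omega
    rw [this]
  rw [h2, h3]

lemma main_id {R : Type*} [CommRing R] (m k : ℕ) (hk : k ≤ m) (x u v : R)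
    (hx : x ^ (2*m+1) = 1) (huv : u * v = 1) :
    (∏ i ∈ range (m-k), (1 - u * x^(2*i+1))) * (∏ i ∈ range k, (1 - v * x^(2*i+2))) * (-u)^k
    = (-u)^(m-k) * x^(m^2+k) *
      ((∏ i ∈ range k, (1 - u * x^(2*i+1))) * (∏ i ∈ range (m-k), (1 - v * x^(2*i+2)))) := by
  obtain ⟨d, rfl⟩ : ∃ d, m = k + d := ⟨m - k, by omega⟩
  have hmk : k + d - k = d := by omega
  rw [hmk]
  rw [key_prod (k+d) x u v hx huv d (by omega), key_prod (k+d) x u v hx huv k (by omega)]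
  have h1 : ∀ i : ℕ, 2*(k+d-d+1+i) = 2*(k+i)+2 := by intro i; omega
  have h2 : ∀ i : ℕ, 2*(k+d-k+1+i) = 2*(d+i)+2 := by intro i; omega
  simp only [h1, h2]
  have hA : ∏ i ∈ range (k+d), (1 - v*x^(2*i+2))
      = (∏ i ∈ range k, (1 - v*x^(2*i+2))) * ∏ i ∈ range d, (1 - v*x^(2*(k+i)+2)) :=
    prod_range_add _ k d
  have hB : ∏ i ∈ range (k+d), (1 - v*x^(2*i+2))
      = (∏ i ∈ range d, (1 - v*x^(2*i+2))) * ∏ i ∈ range k, (1 - v*x^(2*(d+i)+2)) := by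
    rw [show k + d = d + k by omega]
    exact prod_range_add _ d k
  have hxp : x^((k+d)^2+k) * x^(k^2) = x^(d^2) := by
    rw [← pow_add, show (k+d)^2+k+(k^2) = d^2 + (2*(k+d)+1)*k by ring, pow_add, pow_mul, hx,
      one_pow, mul_one]
  calc (-u)^d * x^(d^2) * (∏ i ∈ range d, (1 - v*x^(2*(k+i)+2)))
        * (∏ i ∈ range k, (1 - v*x^(2*i+2))) * (-u)^k
      = (-u)^d * (-u)^k * x^(d^2) *
        ((∏ i ∈ range k, (1 - v*x^(2*i+2))) * ∏ i ∈ range d, (1 - v*x^(2*(k+i)+2))) := by ring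
    _ = (-u)^d * (-u)^k * x^(d^2) *
        ((∏ i ∈ range d, (1 - v*x^(2*i+2))) * ∏ i ∈ range k, (1 - v*x^(2*(d+i)+2))) := by
          rw [← hA, ← hB]
    _ = (-u)^d * x^((k+d)^2+k) *
        ((-u)^k * x^(k^2) * (∏ i ∈ range k, (1 - v*x^(2*(d+i)+2))) *
          ∏ i ∈ range d, (1 - v*x^(2*i+2))) := by rw [← hxp]; ring

lemma coprime_aux {F : Type*} [Field F] (n M : ℕ) (β : F) (hβn : β ^ n ≠ 1) :
    IsCoprime (1 - C β * X ^ M) ((X : Polynomial F) ^ n - 1) := by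
  set t : Polynomial F := C β * X ^ M with ht
  obtain ⟨S, hS⟩ : (1 - t) ∣ (1 - t^n) := by
    have := sub_dvd_pow_sub_pow (1 : Polynomial F) t n
    simpa using this
  obtain ⟨T, hT⟩ : ((X : Polynomial F)^n - 1) ∣ (X^(M*n) - 1) := by
    have := sub_dvd_pow_sub_pow ((X : Polynomial F)^n) 1 M
    simpa [← pow_mul, mul_comm] using this
  have htn : t^n = C (β^n) * X^(M*n) := by
    rw [ht, mul_pow, ← C_pow, ← pow_mul]
  have hw : (1 : F) - β^n ≠ 0 := by
    intro h
    apply hβn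
    linear_combination -h
  refine ⟨C ((1-β^n)⁻¹) * S, C ((1-β^n)⁻¹) * C (β^n) * T, ?_⟩
  have key : S * (1 - t) + C (β^n) * T * ((X : Polynomial F)^n - 1) = C (1 - β^n) := by
    have e1 : (1 - t) * S = 1 - C (β^n) * X^(M*n) := by rw [← hS, htn]
    have e2 : ((X : Polynomial F)^n - 1) * T = X^(M*n) - 1 := by rw [← hT]
    rw [map_sub, map_one]
    linear_combination e1 + C (β^n) * e2
  calc C ((1-β^n)⁻¹) * S * (1 - t) + C ((1-β^n)⁻¹) * C (β^n) * T * ((X : Polynomial F)^n - 1)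
      = C ((1-β^n)⁻¹) * (S * (1 - t) + C (β^n) * T * ((X : Polynomial F)^n - 1)) := by ring
    _ = C ((1-β^n)⁻¹) * C (1 - β^n) := by rw [key]
    _ = 1 := by rw [← C_mul, inv_mul_cancel₀ hw, C_1]

/-- The numerator-type product `(aq; q²)_s` as a polynomial in `q`. -/
def Ppoly (s : ℕ) : Polynomial K0 := ∏ i ∈ range s, (1 - C aP * X^(2*i+1))

/-- The denominator-type product `(q²/a; q²)_s` as a polynomial in `q`. -/
def Qpoly (s : ℕ) : Polynomial K0 := ∏ i ∈ range s, (1 - C aP⁻¹ * X^(2*i+2))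

lemma haP : aP ≠ 0 := RatFunc.X_ne_zero

lemma haPn {n : ℕ} (hpos : 0 < n) : aP ^ n ≠ 1 := by
  intro h
  have h2 : (algebraMap (Polynomial ℚ) K0) (X ^ n) = (algebraMap (Polynomial ℚ) K0) 1 := by
    rw [map_pow, map_one, RatFunc.algebraMap_X]; exact h
  have h3 := RatFunc.algebraMap_injective ℚ h2
  have := congrArg natDegree h3
  simp [natDegree_X_pow] at this
  omega

lemma phiP (s : ℕ) : algebraMap (Polynomial K0) L (Ppoly s) = qpoch (a*q) (q^2) s := by
  rw [Ppoly, qpoch, map_prod]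
  refine prod_congr rfl fun i _ => ?_
  rw [map_sub, map_one, map_mul, map_pow, RatFunc.algebraMap_C, RatFunc.algebraMap_X]
  show 1 - RatFunc.C aP * q ^ (2*i+1) = 1 - a * q * (q^2)^i
  have : a = RatFunc.C aP := rfl
  rw [← this]; ring

lemma phiQ (s : ℕ) : algebraMap (Polynomial K0) L (Qpoly s) = qpoch (q^2/a) (q^2) s := by
  rw [Qpoly, qpoch, map_prod]
  refine prod_congr rfl fun i _ => ?_
  rw [map_sub, map_one, map_mul, map_pow, RatFunc.algebraMap_C, RatFunc.algebraMap_X]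
  show 1 - RatFunc.C aP⁻¹ * q ^ (2*i+2) = 1 - q^2/a * (q^2)^i
  rw [map_inv₀]
  have : a = RatFunc.C aP := rfl
  rw [← this]
  field_simp
  ring

lemma Qpoly_ne (s : ℕ) : Qpoly s ≠ 0 := by
  rw [Qpoly]
  apply prod_ne_zero_iff.mpr
  intro i _ h
  have := congrArg (fun p => Polynomial.eval 0 p) h
  simp at this

theorem stmt_11 (n : ℕ) (hn : Odd n) (hpos : 0 < n) (k : ℕ)
    (hk : k ≤ (n - 1) / 2) :
    PolyModEq (cyclotomic n K0)
      (qpoch (a * q) (q ^ 2) ((n - 1) / 2 - k) /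
        qpoch (q ^ 2 / a) (q ^ 2) ((n - 1) / 2 - k))
      ((-a) ^ (((n : ℤ) - 1) / 2 - 2 * k) *
        (qpoch (a * q) (q ^ 2) k / qpoch (q ^ 2 / a) (q ^ 2) k) *
        q ^ ((n - 1) ^ 2 / 4 + k)) := by
  obtain ⟨m, hm0⟩ := hn
  have hm2 : n = 2*m + 1 := by omega
  have hmk : (n-1)/2 = m := by omega
  have hk' : k ≤ m := by omega
  have he' : (n-1)^2/4 = m^2 := by
    rw [show n - 1 = 2*m by omega, show (2*m)^2 = m^2*4 by ring,
      Nat.mul_div_cancel _ (by norm_num)]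
  have hzint : ((n:ℤ)-1)/2 - 2*(k:ℤ) = (m:ℤ) - 2*k := by
    have : (n:ℤ) = 2*(m:ℤ)+1 := by exact_mod_cast hm2
    omega
  rw [hmk, he', hzint]
  set c : K0 := (-aP) ^ ((m:ℤ) - 2*(k:ℤ)) with hc
  set N : Polynomial K0 :=
    Ppoly (m-k) * Qpoly k - C c * X^(m^2+k) * (Ppoly k * Qpoly (m-k)) with hN
  refine ⟨N, Qpoly (m-k) * Qpoly k, ?_, ?_, ?_⟩
  · -- coprimality of the denominator with the cyclotomic polynomial
    have hcycdvd : cyclotomic n K0 ∣ (X^n - 1) := cyclotomic.dvd_X_pow_sub_one n K0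
    have hβn : (aP⁻¹) ^ n ≠ 1 := by
      rw [inv_pow]
      exact fun h => haPn hpos (inv_eq_one.mp h)
    have hQcop : ∀ s, IsCoprime (Qpoly s) (cyclotomic n K0) := by
      intro s
      rw [Qpoly]
      apply IsCoprime.prod_left
      intro i _
      exact (coprime_aux n (2*i+2) aP⁻¹ hβn).of_isCoprime_of_dvd_right hcycdvd
    exact (hQcop (m-k)).mul_left (hQcop k)
  · -- divisibility of the numerator by the cyclotomic polynomial
    have hα : aP ≠ 0 := haP
    set I := Ideal.span {(X : Polynomial K0)^(2*m+1) - 1} with hI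
    set π := Ideal.Quotient.mk I with hπ
    have hxI : (π X)^(2*m+1) = 1 := by
      have hm : ((X : Polynomial K0)^(2*m+1) - 1) ∈ I :=
        Ideal.subset_span (Set.mem_singleton _)
      have := Ideal.Quotient.eq_zero_iff_mem.mpr hm
      rw [map_sub, map_pow, map_one] at this
      exact sub_eq_zero.mp this
    have huv : π (C aP) * π (C aP⁻¹) = 1 := by
      rw [← map_mul, ← C_mul, mul_inv_cancel₀ hα, C_1, map_one]
    have hmain := main_id m k hk' (π X) (π (C aP)) (π (C aP⁻¹)) hxI huv
    have hneg : π (C (-aP)) = - π (C aP) := by rw [map_neg, map_neg]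
    have hscal : c * (-aP)^k = (-aP)^(m-k) := by
      rw [hc, ← zpow_natCast (-aP) k, ← zpow_add₀ (neg_ne_zero.mpr hα),
        ← zpow_natCast (-aP) (m-k)]
      congr 1
      omega
    have hcC : π (C c) * (- π (C aP))^k = (- π (C aP))^(m-k) := by
      rw [← hneg, ← map_pow, ← map_mul, ← C_pow, ← C_mul, hscal, C_pow, map_pow, hneg]
    have hzero : π (N * (C (-aP))^k) = 0 := by
      rw [hN]
      simp only [Ppoly, Qpoly, map_mul, map_sub, map_pow, map_prod, map_one, hneg]
      linear_combination hmain - (π X)^(m^2+k) *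
        ((∏ i ∈ range k, (1 - π (C aP) * (π X)^(2*i+1))) *
         (∏ i ∈ range (m-k), (1 - π (C aP⁻¹) * (π X)^(2*i+2)))) * hcC
    have hmem : N * (C (-aP))^k ∈ I := Ideal.Quotient.eq_zero_iff_mem.mp hzero
    have hdvd1 : ((X : Polynomial K0)^(2*m+1) - 1) ∣ N * (C (-aP))^k :=
      Ideal.mem_span_singleton.mp (by rwa [hI] at hmem)
    have hdvd2 : cyclotomic n K0 ∣ N * (C (-aP))^k := by
      refine dvd_trans ?_ hdvd1
      rw [← hm2]
      exact cyclotomic.dvd_X_pow_sub_one n K0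
    have hu : IsUnit ((C (-aP))^k : Polynomial K0) :=
      (isUnit_C.mpr (isUnit_iff_ne_zero.mpr (neg_ne_zero.mpr hα))).pow k
    obtain ⟨w, hw⟩ := hu.exists_right_inv
    have : N = N * (C (-aP))^k * w := by rw [mul_assoc, hw, mul_one]
    rw [this]
    exact hdvd2.mul_right w
  · -- the defining equation in `L`
    have hQ1 : algebraMap (Polynomial K0) L (Qpoly (m-k)) ≠ 0 :=
      (map_ne_zero_iff _ (RatFunc.algebraMap_injective K0)).mpr (Qpoly_ne _)
    have hQ2 : algebraMap (Polynomial K0) L (Qpoly k) ≠ 0 :=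
      (map_ne_zero_iff _ (RatFunc.algebraMap_injective K0)).mpr (Qpoly_ne _)
    have hca : ((-a) ^ ((m:ℤ) - 2*(k:ℤ)) : L) = algebraMap (Polynomial K0) L (C c) := by
      rw [RatFunc.algebraMap_C, hc, map_zpow₀, map_neg]
      rfl
    have hqe : (q ^ (m^2+k) : L) = algebraMap (Polynomial K0) L (X^(m^2+k)) := by
      rw [map_pow, RatFunc.algebraMap_X]; rfl
    rw [← phiP (m-k), ← phiQ (m-k), ← phiP k, ← phiQ k, hca, hqe, hN]
    rw [map_mul, map_sub, map_mul, map_mul, map_mul]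
    field_simp
    simp only [map_mul]
    ring
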